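/- arXiv:2105.00320 — 4 statements merged into one kernel-verified Lean document; each statement's English description precedes it below -/
import Mathlib

section
/- For every α > 0 and every dimension d ≥ 1, there exists a finite constant C > 0 (depending only on α and d) such that for all x ∈ [0,1]^d, the difference |‖x‖^α − ∑_{i=1}^d x_i^α| is at most C · ∑_{i ≠ j} (x_i x_j)^{min(1,α)/2}, where ‖x‖ denotes the Euclidean norm. -/
/-!
Let `m = x_k` be the largest coordinate. Both `‖x‖^α` and `∑ x_i^α` lie between `m^α` and
`m^α + C ∑_{i ≠ k} (x_i x_k)^β`, `β = min(1,α)/2`.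
For the power sum this is `x_i^α ≤ (x_i x_k)^{α/2}`.
For the norm, `‖x‖² = m² + b` with `b = ∑_{i ≠ k} x_i² ≤ ∑_{i ≠ k} x_i x_k`, and the increment
`(m² + b)^{α/2} - m^α` is at most `b^{α/2}` when `α ≤ 2` (subadditivity) and `O(b)` when `α > 2`
(convexity, with `‖x‖² ≤ d`).
-/

open Real Finset

lemma Real.rpow_sum_le_sum_rpow {ι : Type*} (s : Finset ι) {f : ι → ℝ} {p : ℝ}
    (hf : ∀ i ∈ s, 0 ≤ f i) (hp : 0 < p) (hp1 : p ≤ 1) :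
    (∑ i ∈ s, f i) ^ p ≤ ∑ i ∈ s, f i ^ p := by
  induction s using Finset.cons_induction with
  | empty => simp [zero_rpow hp.ne']
  | cons a s ha ih =>
    rw [forall_mem_cons] at hf
    rw [sum_cons, sum_cons]
    exact (rpow_add_le_add_rpow hf.1 (sum_nonneg hf.2) hp.le hp1).trans
      (add_le_add le_rfl (ih hf.2))

lemma Real.rpow_add_sub_rpow_le_mul {γ a b : ℝ} (hγ : 1 ≤ γ) (ha : 0 ≤ a) (hb : 0 ≤ b) :
    (a + b) ^ γ - a ^ γ ≤ γ * (a + b) ^ (γ - 1) * b := by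
  rcases hb.eq_or_lt with rfl | hb
  · simp
  have := (convexOn_rpow hγ).slope_le_of_hasDerivAt (x := a) (y := a + b) ha
    (by simp only [Set.mem_Ici]; positivity) (by linarith) (hasDerivAt_rpow_const (Or.inr hγ))
  rwa [slope_def_field, add_sub_cancel_left, div_le_iff₀ hb] at this

lemma Real.rpow_add_sub_rpow_le {γ a b D : ℝ} (hγ : 0 < γ) (ha : 0 ≤ a) (hb : 0 ≤ b)
    (hD : a + b ≤ D) :
    (a + b) ^ γ - a ^ γ ≤ max 1 (γ * D ^ (γ - 1)) * b ^ min 1 γ := by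
  rcases le_total γ 1 with hγ1 | hγ1
  · rw [min_eq_right hγ1]
    calc (a + b) ^ γ - a ^ γ ≤ b ^ γ := by linarith [rpow_add_le_add_rpow ha hb hγ.le hγ1]
      _ ≤ _ := le_mul_of_one_le_left (by positivity) (le_max_left _ _)
  · rw [min_eq_left hγ1, rpow_one]
    calc (a + b) ^ γ - a ^ γ ≤ γ * (a + b) ^ (γ - 1) * b := rpow_add_sub_rpow_le_mul hγ1 ha hb
      _ ≤ γ * D ^ (γ - 1) * b := by gcongr
      _ ≤ _ := by gcongr; exact le_max_right _ _

lemma Real.sqrt_rpow_eq_rpow_half {a : ℝ} (ha : 0 ≤ a) (α : ℝ) : √a ^ α = a ^ (α / 2) := by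
  rw [sqrt_eq_rpow, ← rpow_mul ha, one_div_mul_eq_div]

lemma Real.rpow_le_mul_rpow_half_of_le {a b α : ℝ} (ha : 0 ≤ a) (hab : a ≤ b) (hα : 0 ≤ α) :
    a ^ α ≤ (a * b) ^ (α / 2) := by
  calc a ^ α = (a * a) ^ (α / 2) := by rw [← sqrt_rpow_eq_rpow_half (by positivity),
          sqrt_mul_self ha]
    _ ≤ (a * b) ^ (α / 2) := by gcongr

lemma Finset.sum_erase_le_sum_offDiag {ι : Type*} [Fintype ι] [DecidableEq ι] {f : ι → ι → ℝ}
    (hf : ∀ i j, 0 ≤ f i j) (k : ι) :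
    ∑ i ∈ univ.erase k, f i k ≤ ∑ i, ∑ j, if i ≠ j then f i j else 0 := by
  calc ∑ i ∈ univ.erase k, f i k = ∑ i, if i ≠ k then f i k else 0 := by
        rw [← sum_filter, filter_ne']
    _ ≤ _ := sum_le_sum fun i _ => single_le_sum (f := fun j => if i ≠ j then f i j else 0)
        (fun j _ => by split_ifs <;> simp [hf]) (mem_univ k)

section MaxCoordinate

variable {ι : Type*} [Fintype ι] [DecidableEq ι] {x : ι → ℝ} {k : ι} {α β : ℝ}

lemma sum_rpow_sub_rpow_max_le (hx0 : ∀ i, 0 ≤ x i) (hx1 : ∀ i, x i ≤ 1)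
    (hk : ∀ i, x i ≤ x k) (hβ : 0 ≤ β) (hβα : β ≤ α / 2) :
    ∑ i, x i ^ α - x k ^ α ≤ ∑ i ∈ univ.erase k, (x i * x k) ^ β := by
  rw [← add_sum_erase _ _ (mem_univ k), add_sub_cancel_left]
  gcongr with i
  exact (rpow_le_mul_rpow_half_of_le (hx0 i) (hk i) (by linarith)).trans
    (rpow_le_rpow_of_exponent_ge' (mul_nonneg (hx0 i) (hx0 k))
      (mul_le_one₀ (hx1 i) (hx0 k) (hx1 k)) hβ hβα)

lemma sqrt_sum_sq_rpow_sub_rpow_max_le (hx0 : ∀ i, 0 ≤ x i) (hx1 : ∀ i, x i ≤ 1)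
    (hk : ∀ i, x i ≤ x k) (hα : 0 < α) (hβ : 0 ≤ β) (hβα : β ≤ min 1 (α / 2)) :
    √(∑ i, x i ^ 2) ^ α - x k ^ α ≤
      max 1 (α / 2 * (Fintype.card ι : ℝ) ^ (α / 2 - 1)) * ∑ i ∈ univ.erase k, (x i * x k) ^ β := by
  set b := ∑ i ∈ univ.erase k, x i ^ 2
  have hsplit : ∑ i, x i ^ 2 = x k ^ 2 + b := (add_sum_erase _ _ (mem_univ k)).symm
  have hcard : x k ^ 2 + b ≤ Fintype.card ι :=
    calc x k ^ 2 + b = ∑ i, x i ^ 2 := hsplit.symm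
      _ ≤ ∑ _i : ι, (1 : ℝ) := sum_le_sum fun i _ => pow_le_one₀ (hx0 i) (hx1 i)
      _ = Fintype.card ι := by simp
  have hb : b ^ min 1 (α / 2) ≤ ∑ i ∈ univ.erase k, (x i * x k) ^ β :=
    calc b ^ min 1 (α / 2) ≤ (∑ i ∈ univ.erase k, x i * x k) ^ min 1 (α / 2) :=
          rpow_le_rpow (sum_nonneg fun i _ => sq_nonneg _) (sum_le_sum fun i _ => by
            rw [sq]; exact mul_le_mul_of_nonneg_left (hk i) (hx0 i)) (by positivity)
      _ ≤ ∑ i ∈ univ.erase k, (x i * x k) ^ min 1 (α / 2) :=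
          rpow_sum_le_sum_rpow _ (fun i _ => mul_nonneg (hx0 i) (hx0 k))
            (lt_min one_pos (half_pos hα)) (min_le_left _ _)
      _ ≤ _ := sum_le_sum fun i _ => rpow_le_rpow_of_exponent_ge' (mul_nonneg (hx0 i) (hx0 k))
            (mul_le_one₀ (hx1 i) (hx0 k) (hx1 k)) hβ hβα
  have hm : x k ^ α = (x k ^ 2) ^ (α / 2) := by
    rw [← sqrt_rpow_eq_rpow_half (sq_nonneg _), sqrt_sq (hx0 k)]
  rw [sqrt_rpow_eq_rpow_half (sum_nonneg fun i _ => sq_nonneg _), hm, hsplit]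
  exact (rpow_add_sub_rpow_le (half_pos hα) (sq_nonneg _) (sum_nonneg fun i _ => sq_nonneg _)
    hcard).trans (by gcongr)

end MaxCoordinate

theorem stmt0 (α : ℝ) (hα : 0 < α) (d : ℕ) (hd : 1 ≤ d) :
    ∃ C : ℝ, 0 < C ∧ ∀ x : Fin d → ℝ, (∀ i, x i ∈ Set.Icc (0:ℝ) 1) →
      |(Real.sqrt (∑ i, x i ^ 2)) ^ α - ∑ i, x i ^ α|
        ≤ C * ∑ i, ∑ j, if i ≠ j then (x i * x j) ^ (min 1 α / 2) else 0 := by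
  set C := max 1 (α / 2 * (d : ℝ) ^ (α / 2 - 1))
  have hC : 1 ≤ C := le_max_left _ _
  refine ⟨C, by linarith, fun x hx => ?_⟩
  have hx0 i : 0 ≤ x i := (hx i).1
  have hβ : 0 ≤ min 1 α / 2 := by positivity
  obtain ⟨k, -, hk⟩ := exists_max_image univ x (univ_nonempty_iff.2 ⟨⟨0, hd⟩⟩)
  replace hk i : x i ≤ x k := hk i (mem_univ i)
  set R := ∑ i ∈ univ.erase k, (x i * x k) ^ (min 1 α / 2)
  have hR : R ≤ _ :=
    sum_erase_le_sum_offDiag (fun i j => rpow_nonneg (mul_nonneg (hx0 i) (hx0 j)) _) k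
  have hsum := sum_rpow_sub_rpow_max_le hx0 (fun i => (hx i).2) hk hβ
    (by linarith [min_le_right 1 α] : min 1 α / 2 ≤ α / 2)
  have hnorm := sqrt_sum_sq_rpow_sub_rpow_max_le hx0 (fun i => (hx i).2) hk hα hβ
    (by rw [le_min_iff]; constructor <;> linarith [min_le_left 1 α, min_le_right 1 α])
  rw [Fintype.card_fin] at hnorm
  have hsum_ge : x k ^ α ≤ ∑ i, x i ^ α :=
    single_le_sum (fun i _ => rpow_nonneg (hx0 i) α) (mem_univ k)
  have hnorm_ge : x k ^ α ≤ √(∑ i, x i ^ 2) ^ α :=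
    rpow_le_rpow (hx0 k) (le_sqrt_of_sq_le (single_le_sum (fun i _ => sq_nonneg (x i))
      (mem_univ k))) hα.le
  have hR0 : 0 ≤ R := sum_nonneg fun i _ => rpow_nonneg (mul_nonneg (hx0 i) (hx0 k)) _
  have hRC : R ≤ C * R := le_mul_of_one_le_left hR0 hC
  have hCR : C * R ≤ C * _ := mul_le_mul_of_nonneg_left hR (by linarith)
  exact abs_sub_le_iff.2 ⟨by linarith, by linarith⟩
end

section
/- For α > 1 and x ∈ [0,1]^d, |‖x‖^α − (∑_{i=1}^d x_i)^α| ≤ (α d^{α−1}/2) ∑_{i≠j} √(x_i x_j). -/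
open Real Finset

theorem stmt3 (α : ℝ) (hα : 1 < α) (d : ℕ) (x : Fin d → ℝ)
    (hx : ∀ i, x i ∈ Set.Icc (0:ℝ) 1) :
    |(Real.sqrt (∑ i, x i ^ 2)) ^ α - (∑ i, x i) ^ α|
      ≤ (α * (d : ℝ) ^ (α - 1) / 2) *
          ∑ i, ∑ j, if i ≠ j then Real.sqrt (x i * x j) else 0 := by
  have hxnn : ∀ i, 0 ≤ x i := fun i => (hx i).1
  set a := Real.sqrt (∑ i, x i ^ 2) with ha_def
  set b := ∑ i, x i with hb_def
  set T := ∑ i, ∑ j, if i ≠ j then Real.sqrt (x i * x j) else 0 with hT_def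
  set Q := ∑ i, ∑ j, if i ≠ j then x i * x j else 0 with hQ_def
  have ha0 : 0 ≤ a := Real.sqrt_nonneg _
  have hb0 : 0 ≤ b := Finset.sum_nonneg fun i _ => hxnn i
  have hT0 : 0 ≤ T := by
    apply Finset.sum_nonneg; intro i _; apply Finset.sum_nonneg; intro j _
    split <;> [exact Real.sqrt_nonneg _; exact le_refl 0]
  have ha2 : a ^ 2 = ∑ i, x i ^ 2 :=
    Real.sq_sqrt (Finset.sum_nonneg fun i _ => sq_nonneg _)
  -- b² = a² + Q
  have hsq : b ^ 2 = a ^ 2 + Q := by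
    rw [ha2, hb_def, hQ_def, sq, Finset.sum_mul_sum, ← Finset.sum_add_distrib]
    apply Finset.sum_congr rfl
    intro i _
    have : ∀ j : Fin d, x i * x j =
        (if i = j then x i * x j else 0) + (if i ≠ j then x i * x j else 0) := by
      intro j; by_cases h : i = j <;> simp [h]
    rw [Finset.sum_congr rfl (fun j _ => this j), Finset.sum_add_distrib,
      Finset.sum_ite_eq, if_pos (Finset.mem_univ i), sq]
  -- a ≤ b
  have hab : a ≤ b := by
    nlinarith [hsq, ha0, hb0, Finset.sum_nonneg (s := Finset.univ (α := Fin d))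
      (f := fun i => ∑ j, if i ≠ j then x i * x j else 0)
      (fun i _ => Finset.sum_nonneg fun j _ => by
        split <;> [exact mul_nonneg (hxnn i) (hxnn _); exact le_refl 0])]
  -- Q ≤ b * T / 2
  have hQT : Q ≤ b * T / 2 := by
    have key : ∀ i j : Fin d, i ≠ j →
        x i * x j ≤ Real.sqrt (x i * x j) * (b / 2) := by
      intro i j hij
      have hsum : x i + x j ≤ b := by
        have hsub : ({i, j} : Finset (Fin d)) ⊆ Finset.univ := Finset.subset_univ _
        have := Finset.sum_le_sum_of_subset_of_nonneg hsub
          (fun k _ _ => hxnn k)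
        rwa [Finset.sum_pair hij] at this
      have h1 : Real.sqrt (x i * x j) ≤ (x i + x j) / 2 := by
        rw [Real.sqrt_mul (hxnn i)]
        nlinarith [sq_nonneg (Real.sqrt (x i) - Real.sqrt (x j)),
          Real.sq_sqrt (hxnn i), Real.sq_sqrt (hxnn j),
          Real.sqrt_nonneg (x i), Real.sqrt_nonneg (x j)]
      have h2 : x i * x j = Real.sqrt (x i * x j) * Real.sqrt (x i * x j) :=
        (Real.mul_self_sqrt (mul_nonneg (hxnn i) (hxnn j))).symm
      calc x i * x j = Real.sqrt (x i * x j) * Real.sqrt (x i * x j) := h2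
        _ ≤ Real.sqrt (x i * x j) * (b / 2) := by
            apply mul_le_mul_of_nonneg_left _ (Real.sqrt_nonneg _)
            calc Real.sqrt (x i * x j) ≤ (x i + x j) / 2 := h1
              _ ≤ b / 2 := by linarith
    calc Q ≤ ∑ i, ∑ j, (if i ≠ j then Real.sqrt (x i * x j) else 0) * (b / 2) := by
          apply Finset.sum_le_sum; intro i _
          apply Finset.sum_le_sum; intro j _
          by_cases h : i = j
          · simp [h]
          · simp only [if_pos h, ne_eq, h, not_false_eq_true]
            exact key i j h
      _ = b * T / 2 := by
          simp only [← Finset.sum_mul]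
          rw [← hT_def]; ring
  -- b - a ≤ T / 2
  have hba : b - a ≤ T / 2 := by
    rcases eq_or_lt_of_le hb0 with hb | hb
    · have : a ≤ 0 := by linarith [hab, hb]
      have ha : a = 0 := le_antisymm this ha0
      rw [ha, ← hb]; linarith
    · nlinarith [mul_nonneg ha0 (sub_nonneg.2 hab), hsq, hQT, hb]
  -- Bernoulli: b^α - a^α ≤ α * b^(α-1) * (b - a)
  have hbern : b ^ α - a ^ α ≤ α * b ^ (α - 1) * (b - a) := by
    rcases eq_or_lt_of_le hb0 with hb | hb
    · have ha : a = 0 := le_antisymm (by linarith) ha0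
      rw [ha, ← hb]; simp
    · have hbne : b ≠ 0 := ne_of_gt hb
      have hs : -1 ≤ a / b - 1 := by
        have : 0 ≤ a / b := div_nonneg ha0 hb0
        linarith
      have hbern0 := one_add_mul_self_le_rpow_one_add hs hα.le
      rw [show 1 + (a / b - 1) = a / b by ring] at hbern0
      have hdiv : (a / b) ^ α = a ^ α / b ^ α := Real.div_rpow ha0 hb0 α
      rw [hdiv] at hbern0
      have hbpow : (0:ℝ) < b ^ α := Real.rpow_pos_of_pos hb α
      have h1 : (1 + α * (a / b - 1)) * b ^ α ≤ a ^ α := by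
        calc (1 + α * (a / b - 1)) * b ^ α ≤ (a ^ α / b ^ α) * b ^ α :=
              mul_le_mul_of_nonneg_right hbern0 hbpow.le
          _ = a ^ α := div_mul_cancel₀ _ (ne_of_gt hbpow)
      have hsplit : b ^ α = b ^ (α - 1) * b := by
        rw [← Real.rpow_add_one hbne, sub_add_cancel]
      rw [hsplit] at h1 ⊢
      have : (1 + α * (a / b - 1)) * (b ^ (α - 1) * b)
          = b ^ (α - 1) * b + α * b ^ (α - 1) * (a - b) := by
        field_simp
      rw [this] at h1
      linarith
  -- a^α ≤ b^α
  have hpow_le : a ^ α ≤ b ^ α := Real.rpow_le_rpow ha0 hab (by linarith)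
  -- b ≤ d
  have hbd : b ≤ (d : ℝ) := by
    calc b ≤ ∑ _i : Fin d, (1:ℝ) := Finset.sum_le_sum fun i _ => (hx i).2
      _ = d := by simp
  have hbd' : b ^ (α - 1) ≤ (d : ℝ) ^ (α - 1) :=
    Real.rpow_le_rpow hb0 hbd (by linarith)
  rw [abs_of_nonpos (by linarith), neg_sub]
  calc b ^ α - a ^ α ≤ α * b ^ (α - 1) * (b - a) := hbern
    _ ≤ α * (d : ℝ) ^ (α - 1) * (T / 2) := by
        have hα0 : (0:ℝ) ≤ α := by linarith
        apply mul_le_mul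
        · exact mul_le_mul_of_nonneg_left hbd' hα0
        · linarith
        · linarith
        · positivity
    _ = α * (d : ℝ) ^ (α - 1) / 2 * T := by ring
end

section
/- For every α ∈ (0,1] there exists a constant C > 0 depending only on α and d such that for all x ∈ [0,1]^d, |(∑_{i=1}^d x_i)^α − ∑_{i=1}^d x_i^α| ≤ C ∑_{i≠j} (x_i x_j)^{α/2}. -/
open Real Finset

private lemma rpow_add_le (a b p : ℝ) (ha : 0 ≤ a) (hb : 0 ≤ b) (hp : 0 ≤ p) (hp1 : p ≤ 1) :
    (a + b) ^ p ≤ a ^ p + b ^ p := by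
  have h := NNReal.rpow_add_le_add_rpow a.toNNReal b.toNNReal hp hp1
  have := NNReal.coe_le_coe.mpr h
  push_cast at this
  rwa [Real.coe_toNNReal _ ha, Real.coe_toNNReal _ hb] at this

private lemma sum_rpow_le {ι : Type*} (s : Finset ι) (f : ι → ℝ) (p : ℝ)
    (hf : ∀ i ∈ s, 0 ≤ f i) (hp : 0 < p) (hp1 : p ≤ 1) :
    (∑ i ∈ s, f i) ^ p ≤ ∑ i ∈ s, f i ^ p := by
  classical
  induction s using Finset.induction with
  | empty => simp [Real.zero_rpow hp.ne']
  | @insert a s ha ih =>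
    rw [Finset.sum_insert ha, Finset.sum_insert ha]
    calc (f a + ∑ i ∈ s, f i) ^ p ≤ f a ^ p + (∑ i ∈ s, f i) ^ p :=
          rpow_add_le _ _ _ (hf a (by simp)) (Finset.sum_nonneg fun i hi => hf i (by simp [hi]))
            hp.le hp1
      _ ≤ f a ^ p + ∑ i ∈ s, f i ^ p := by
          gcongr
          exact ih fun i hi => hf i (by simp [hi])

private lemma sq_half (a α : ℝ) (ha : 0 ≤ a) : (a * a) ^ (α / 2) = a ^ α := by
  rw [← sq, ← Real.rpow_natCast a 2, ← Real.rpow_mul ha]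
  congr 1
  ring

private lemma two_var (a b α : ℝ) (ha : 0 ≤ a) (hb : 0 ≤ b) (hα : 0 < α) (hα1 : α ≤ 1) :
    a ^ α + b ^ α - (a + b) ^ α ≤ (a * b) ^ (α / 2) := by
  have key : ∀ u v : ℝ, 0 ≤ u → u ≤ v →
      u ^ α + v ^ α - (u + v) ^ α ≤ (u * v) ^ (α / 2) := by
    intro u v hu huv
    have hv : 0 ≤ v := hu.trans huv
    have h1 : v ^ α ≤ (u + v) ^ α := by
      apply Real.rpow_le_rpow hv (by linarith) hα.le
    have h2 : u ^ α ≤ (u * v) ^ (α / 2) := by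
      rw [← sq_half u α hu]
      exact Real.rpow_le_rpow (by positivity) (by nlinarith) (by positivity)
    linarith
  rcases le_total a b with hab | hab
  · exact key a b ha hab
  · have := key b a hb hab
    rw [mul_comm b a, add_comm b a] at this
    linarith [this]

/-- The main gap bound over a finset. -/
private lemma gap_bound {ι : Type*} [DecidableEq ι] (α : ℝ) (hα : 0 < α) (hα1 : α ≤ 1)
    (s : Finset ι) (x : ι → ℝ) (hx : ∀ i, 0 ≤ x i) :
    ∑ i ∈ s, x i ^ α - (∑ i ∈ s, x i) ^ α ≤
      ∑ i ∈ s, ∑ j ∈ s, if i ≠ j then (x i * x j) ^ (α / 2) else 0 := by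
  classical
  induction s using Finset.induction with
  | empty => simp [Real.zero_rpow hα.ne']
  | @insert a s ha ih =>
    have hS : 0 ≤ ∑ i ∈ s, x i := Finset.sum_nonneg fun i _ => hx i
    have h2 : x a ^ α + (∑ i ∈ s, x i) ^ α - (x a + ∑ i ∈ s, x i) ^ α ≤
        (x a * ∑ i ∈ s, x i) ^ (α / 2) := two_var _ _ _ (hx a) hS hα hα1
    have h3 : (x a * ∑ i ∈ s, x i) ^ (α / 2) ≤ ∑ j ∈ s, (x a * x j) ^ (α / 2) := by
      rw [Real.mul_rpow (hx a) hS]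
      rw [show (∑ j ∈ s, (x a * x j) ^ (α / 2)) =
          x a ^ (α / 2) * ∑ j ∈ s, x j ^ (α / 2) by
        rw [Finset.mul_sum]; exact Finset.sum_congr rfl fun j _ =>
          Real.mul_rpow (hx a) (hx j)]
      gcongr
      · exact Real.rpow_nonneg (hx a) _
      · exact sum_rpow_le s x (α / 2) (fun i _ => hx i) (by positivity) (by linarith)
    -- rewrite the RHS double sum
    have hrhs : ∑ i ∈ insert a s, ∑ j ∈ insert a s, (if i ≠ j then (x i * x j) ^ (α / 2) else 0)
        = (∑ j ∈ s, (x a * x j) ^ (α / 2)) + (∑ i ∈ s, (x i * x a) ^ (α / 2))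
          + ∑ i ∈ s, ∑ j ∈ s, (if i ≠ j then (x i * x j) ^ (α / 2) else 0) := by
      rw [Finset.sum_insert ha, Finset.sum_insert ha]
      have e1 : ∑ j ∈ s, (if a ≠ j then (x a * x j) ^ (α / 2) else 0)
          = ∑ j ∈ s, (x a * x j) ^ (α / 2) :=
        Finset.sum_congr rfl fun j hj => by
          simp [show a ≠ j from fun h => ha (h ▸ hj)]
      have e2 : ∀ i ∈ s, ∑ j ∈ insert a s, (if i ≠ j then (x i * x j) ^ (α / 2) else 0)
          = (x i * x a) ^ (α / 2) + ∑ j ∈ s, (if i ≠ j then (x i * x j) ^ (α / 2) else 0) := by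
        intro i hi
        rw [Finset.sum_insert ha]
        simp [show i ≠ a from fun h => ha (h ▸ hi)]
      rw [Finset.sum_congr rfl e2, Finset.sum_add_distrib]
      rw [e1, if_neg (by simp)]
      ring
    rw [hrhs, Finset.sum_insert ha, Finset.sum_insert ha]
    have h4 : 0 ≤ ∑ i ∈ s, (x i * x a) ^ (α / 2) :=
      Finset.sum_nonneg fun i _ => Real.rpow_nonneg (mul_nonneg (hx i) (hx a)) _
    linarith

theorem stmt4 (α : ℝ) (hα : 0 < α) (hα1 : α ≤ 1) (d : ℕ) (hd : 1 ≤ d) :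
    ∃ C : ℝ, 0 < C ∧ ∀ x : Fin d → ℝ, (∀ i, x i ∈ Set.Icc (0:ℝ) 1) →
      |(∑ i, x i) ^ α - ∑ i, x i ^ α|
        ≤ C * ∑ i, ∑ j, if i ≠ j then (x i * x j) ^ (α / 2) else 0 := by
  refine ⟨1, one_pos, fun x hx => ?_⟩
  have hx' : ∀ i, 0 ≤ x i := fun i => (hx i).1
  have hle : (∑ i, x i) ^ α ≤ ∑ i, x i ^ α :=
    sum_rpow_le Finset.univ x α (fun i _ => hx' i) hα hα1
  have hgap := gap_bound α hα hα1 Finset.univ x hx'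
  rw [abs_sub_comm, abs_of_nonneg (by linarith)]
  linarith
end

section
/- For the d-dimensional unit cube with d ≥ 2, the integral over [0,1]^d of 1/(1 + b_1 b_2 ⋯ b_d)^2 equals log 2 when d = 2, and equals ((2^{d−2} − 1)/2^{d−2}) · ζ(d−1) when d ≥ 3, where ζ is the Riemann zeta function. For d = 1 the integral equals 1/2. -/
/-!
Expanding `1 / (1 + t) ^ 2 = ∑ (-1) ^ n (n + 1) t ^ n`, the error after `N` terms is at most
`(N + 1) t ^ N` for `t ≥ 0`, and Fubini gives `∫_{[0,1]^d} |b| ^ n = (n + 1) ^ (-d)`. Hence for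
`d ≥ 2` the integral is the limit of the partial sums of `∑ (-1) ^ n / (n + 1) ^ (d - 1)`. For
`d = 2` this is the alternating harmonic series, whose partial sums up to `2N` are
`H_{2N} - H_N → log 2`; for `d ≥ 3` splitting off the odd terms gives the Dirichlet eta value
`(1 - 2 ^ (2 - d)) ζ(d - 1)`. For `d = 1` the integral is elementary.
-/

open Real MeasureTheory Filter Topology Set Finset

theorem setIntegral_Icc_pi_prod {ι 𝕜 : Type*} [Fintype ι] [RCLike 𝕜] (f : ι → ℝ → 𝕜)
    (a b : ι → ℝ) :
    ∫ x in Icc a b, ∏ i, f i (x i) = ∏ i, ∫ y in Icc (a i) (b i), f i y := by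
  rw [← pi_univ_Icc, volume_pi, Measure.restrict_pi_pi, integral_fintype_prod_eq_prod]

theorem one_sub_sq_mul_sum_range_mul_pow {R : Type*} [CommRing R] (N : ℕ) (t : R) :
    (1 - t) ^ 2 * ∑ n ∈ range N, ((n : R) + 1) * t ^ n
      = 1 - (N + 1) * t ^ N + N * t ^ (N + 1) := by
  induction N with
  | zero => simp
  | succ N ih =>
    rw [sum_range_succ, mul_add, ih]
    push_cast
    ring

theorem abs_one_div_one_add_sq_sub_sum_range_le {x : ℝ} (hx : 0 ≤ x) (N : ℕ) :
    |1 / (1 + x) ^ 2 - ∑ n ∈ range N, (-1) ^ n * ((n : ℝ) + 1) * x ^ n|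
      ≤ (N + 1) * x ^ N := by
  have hpos : 0 < (1 + x) ^ 2 := by positivity
  have hremainder : 1 / (1 + x) ^ 2 - ∑ n ∈ range N, (-1) ^ n * ((n : ℝ) + 1) * x ^ n
      = (-x) ^ N * ((N + 1) + N * x) / (1 + x) ^ 2 := by
    have hsum : ∑ n ∈ range N, (-1) ^ n * ((n : ℝ) + 1) * x ^ n
        = ∑ n ∈ range N, ((n : ℝ) + 1) * (-x) ^ n :=
      sum_congr rfl fun n _ => by rw [neg_pow]; ring
    have h := one_sub_sq_mul_sum_range_mul_pow N (-x)
    rw [sub_neg_eq_add] at h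
    rw [eq_div_iff hpos.ne', hsum, sub_mul, one_div_mul_cancel hpos.ne']
    linear_combination -h
  rw [hremainder, abs_div, abs_mul, abs_pow, abs_neg, abs_of_nonneg hx, abs_of_pos hpos,
    abs_of_nonneg (by positivity), div_le_iff₀ hpos]
  have : x ^ N * ((N + 1) + N * x) ≤ x ^ N * ((N + 1) * (1 + x) ^ 2) := by
    gcongr; nlinarith [sq_nonneg x]
  linarith

section UnitCube

variable {ι : Type*} [Fintype ι]

theorem setIntegral_unitCube_prod_pow (n : ℕ) :
    ∫ x in Icc (0 : ι → ℝ) 1, (∏ i, x i) ^ n = (1 / (n + 1)) ^ Fintype.card ι := by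
  simp_rw [← Finset.prod_pow, setIntegral_Icc_pi_prod (fun _ y => y ^ n)]
  simp [integral_Icc_eq_integral_Ioc, ← intervalIntegral.integral_of_le]

theorem integrableOn_unitCube_one_div_one_add_prod_sq :
    IntegrableOn (fun b : ι → ℝ => 1 / (1 + ∏ i, b i) ^ 2) (Icc 0 1) := by
  refine ContinuousOn.integrableOn_Icc (ContinuousOn.div continuousOn_const
    (by fun_prop) fun b hb => ?_)
  have : 0 ≤ ∏ i, b i := prod_nonneg fun i _ => hb.1 i
  positivity

theorem setIntegral_unitCube_sum_range_alternating [Nonempty ι] (N : ℕ) :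
    ∫ b in Icc (0 : ι → ℝ) 1, ∑ n ∈ range N, (-1) ^ n * ((n : ℝ) + 1) * (∏ i, b i) ^ n
      = ∑ n ∈ range N, (-1) ^ n / ((n : ℝ) + 1) ^ (Fintype.card ι - 1) := by
  rw [integral_finsetSum _ fun n _ => (by fun_prop : Continuous _).integrableOn_Icc]
  refine sum_congr rfl fun n _ => ?_
  obtain ⟨k, hk⟩ : ∃ k, Fintype.card ι = k + 1 :=
    ⟨_, (Nat.succ_pred_eq_of_pos Fintype.card_pos).symm⟩
  rw [integral_const_mul, setIntegral_unitCube_prod_pow, hk, Nat.add_sub_cancel, div_pow, one_pow,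
    pow_succ]
  field_simp

theorem tendsto_sum_range_alternating_setIntegral_unitCube (hι : 2 ≤ Fintype.card ι) :
    Tendsto (fun N => ∑ n ∈ range N, (-1) ^ n / ((n : ℝ) + 1) ^ (Fintype.card ι - 1)) atTop
      (𝓝 (∫ b in Icc (0 : ι → ℝ) 1, 1 / (1 + ∏ i, b i) ^ 2)) := by
  have : Nonempty ι := Fintype.card_pos_iff.mp (by omega)
  simp_rw [← setIntegral_unitCube_sum_range_alternating]
  rw [tendsto_iff_norm_sub_tendsto_zero]
  refine squeeze_zero (fun _ => norm_nonneg _)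
    (g := fun N : ℕ => (N + 1) * (1 / ((N : ℝ) + 1)) ^ Fintype.card ι) (fun N => ?_) ?_
  · rw [← integral_sub (by fun_prop : Continuous _).integrableOn_Icc
      integrableOn_unitCube_one_div_one_add_prod_sq, ← setIntegral_unitCube_prod_pow,
      ← integral_const_mul]
    refine norm_integral_le_of_norm_le ((by fun_prop : Continuous _).integrableOn_Icc)
      (ae_restrict_of_forall_mem measurableSet_Icc fun b hb => ?_)
    rw [Real.norm_eq_abs, abs_sub_comm]
    exact abs_one_div_one_add_sq_sub_sum_range_le (prod_nonneg fun i _ => hb.1 i) N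
  · obtain ⟨k, hk⟩ : ∃ k, Fintype.card ι = k + 2 := ⟨_, (Nat.sub_add_cancel hι).symm⟩
    have hbound (N : ℕ) :
        ((N : ℝ) + 1) * (1 / ((N : ℝ) + 1)) ^ (k + 2) = (1 / ((N : ℝ) + 1)) ^ (k + 1) := by
      rw [pow_succ _ (k + 1), mul_left_comm, mul_one_div_cancel (by positivity), mul_one]
    simp_rw [hk, hbound]
    simpa using (tendsto_one_div_add_atTop_nhds_zero_nat (𝕜 := ℝ)).pow (k + 1)

end UnitCube

theorem setIntegral_unitCube_one_div_one_add_prod_sq_fin_one :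
    ∫ b in Icc (0 : Fin 1 → ℝ) 1, 1 / (1 + ∏ i, b i) ^ 2 = 1 / 2 := by
  have h := setIntegral_Icc_pi_prod (fun (_ : Fin 1) (y : ℝ) => 1 / (1 + y) ^ 2) 0 1
  simp only [Fin.prod_univ_one, Pi.zero_apply, Pi.one_apply] at h ⊢
  rw [h, integral_Icc_eq_integral_Ioc, ← intervalIntegral.integral_of_le zero_le_one,
    intervalIntegral.integral_comp_add_left (fun x => 1 / x ^ 2)]
  simp_rw [one_div, ← zpow_natCast, ← zpow_neg]
  rw [integral_zpow (.inr ⟨by norm_num, by norm_num⟩)]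
  norm_num

theorem summable_one_div_nat_add_one_pow {k : ℕ} (hk : 1 < k) :
    Summable fun n : ℕ => 1 / ((n : ℝ) + 1) ^ k := by
  simpa using (summable_nat_add_iff 1).mpr (summable_one_div_nat_pow.mpr hk)

theorem tsum_alternating_one_div_pow {k : ℕ} (hk : 1 < k) :
    ∑' n : ℕ, (-1) ^ n / ((n : ℝ) + 1) ^ k
      = (1 - 2 / 2 ^ k) * ∑' n : ℕ, 1 / ((n : ℝ) + 1) ^ k := by
  set g : ℕ → ℝ := fun n => 1 / ((n : ℝ) + 1) ^ k
  have hg : Summable g := summable_one_div_nat_add_one_pow hk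
  have hodd : HasSum (fun n => g (2 * n + 1)) ((∑' n, g n) / 2 ^ k) := by
    refine hg.hasSum.div_const _ |>.congr_fun fun n => ?_
    simp only [g]
    push_cast
    rw [show (2 * (n : ℝ) + 1 + 1) = 2 * (n + 1) by ring, mul_pow]
    field_simp
  have heven : Summable fun n => g (2 * n) := hg.comp_injective (mul_right_injective₀ two_ne_zero)
  have hsplit := tsum_even_add_odd heven hodd.summable
  have halt : HasSum (fun n : ℕ => (-1) ^ n / ((n : ℝ) + 1) ^ k)
      (∑' n, g (2 * n) + -((∑' n, g n) / 2 ^ k)) := by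
    refine (heven.hasSum.congr_fun fun n => ?_).even_add_odd (hodd.neg.congr_fun fun n => ?_)
    · simp [g, pow_mul]
    · simp [g, pow_succ, pow_mul, neg_div]
  rw [hodd.tsum_eq] at hsplit
  rw [halt.tsum_eq]
  linear_combination hsplit

theorem sum_range_two_mul_alternating_one_div (N : ℕ) :
    ∑ n ∈ range (2 * N), (-1) ^ n / ((n : ℝ) + 1) = harmonic (2 * N) - harmonic N := by
  induction N with
  | zero => simp
  | succ N ih =>
    rw [show 2 * (N + 1) = 2 * N + 1 + 1 by ring, sum_range_succ, sum_range_succ, ih,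
      harmonic_succ, harmonic_succ, harmonic_succ, pow_succ, pow_mul]
    push_cast
    field_simp
    ring

theorem tendsto_sum_range_two_mul_alternating_one_div :
    Tendsto (fun N => ∑ n ∈ range (2 * N), (-1) ^ n / ((n : ℝ) + 1)) atTop (𝓝 (log 2)) := by
  have hγ := tendsto_harmonic_sub_log
  have h2N := hγ.comp (tendsto_id.const_mul_atTop' two_pos)
  have h := (h2N.sub hγ).add_const (log 2)
  rw [sub_self, zero_add] at h
  refine h.congr' ?_
  filter_upwards [eventually_ne_atTop 0] with N hN
  simp only [Function.comp_apply, sum_range_two_mul_alternating_one_div, id, Nat.cast_mul,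
    Nat.cast_ofNat]
  rw [log_mul two_ne_zero (by exact_mod_cast hN)]
  ring

theorem stmt7 (d : ℕ) :
    (d = 1 →
      ∫ b in Set.Icc (0 : Fin d → ℝ) 1, 1 / (1 + ∏ i, b i) ^ 2 = 1 / 2) ∧
    (d = 2 →
      ∫ b in Set.Icc (0 : Fin d → ℝ) 1, 1 / (1 + ∏ i, b i) ^ 2 = Real.log 2) ∧
    (3 ≤ d →
      ∫ b in Set.Icc (0 : Fin d → ℝ) 1, 1 / (1 + ∏ i, b i) ^ 2
        = ((2 ^ (d - 2) - 1) / 2 ^ (d - 2)) *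
            ∑' n : ℕ, (1 : ℝ) / (n + 1) ^ (d - 1)) := by
  refine ⟨?_, ?_, fun hd => ?_⟩
  · rintro rfl
    exact setIntegral_unitCube_one_div_one_add_prod_sq_fin_one
  · rintro rfl
    have h := (tendsto_sum_range_alternating_setIntegral_unitCube (ι := Fin 2) le_rfl).comp
      (tendsto_id.const_mul_atTop' two_pos)
    simp only [Fintype.card_fin, Nat.add_one_sub_one, pow_one, Function.comp_def, id] at h
    exact tendsto_nhds_unique h tendsto_sum_range_two_mul_alternating_one_div
  · obtain ⟨k, rfl⟩ : ∃ k, d = k + 3 := ⟨d - 3, by omega⟩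
    have hk : 1 < k + 2 := by omega
    have hsum := (summable_one_div_nat_add_one_pow hk).alternating.hasSum.tendsto_sum_nat
    simp only [mul_one_div] at hsum
    have hint := tendsto_sum_range_alternating_setIntegral_unitCube (ι := Fin (k + 3)) (by simp)
    rw [Fintype.card_fin, show k + 3 - 1 = k + 2 by omega] at hint
    rw [tendsto_nhds_unique hint hsum, tsum_alternating_one_div_pow hk,
      show k + 3 - 2 = k + 1 by omega, show k + 3 - 1 = k + 2 by omega, pow_succ]
    field_simp
end
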